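/- Let γ > 0 and let L : ℝ^m → ℝ be continuous and nonnegative. Then for every R > 0, sup over θ with ‖θ‖ ≤ R of the Frobenius norm ‖Σ_θ‖_F of the covariance matrix of the density p_θ is finite; i.e., the covariance of the EntropySGD local measure is uniformly bounded on every bounded set of parameters. -/

import Mathlib

open MeasureTheory

/-- The EntropySGD normalization `Z(θ) = ∫ exp(−L(θ') − (γ/2)‖θ−θ'‖²) dθ'`. -/
noncomputable def entropyZ (m : ℕ) (γ : ℝ) (L : EuclideanSpace ℝ (Fin m) → ℝ)
    (θ : EuclideanSpace ℝ (Fin m)) : ℝ :=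
  ∫ θ' : EuclideanSpace ℝ (Fin m), Real.exp (-L θ' - γ / 2 * ‖θ - θ'‖ ^ 2)

/-- The probability density `p_θ(θ') = exp(−L(θ') − (γ/2)‖θ−θ'‖²)/Z(θ)`. -/
noncomputable def entropyPdf (m : ℕ) (γ : ℝ) (L : EuclideanSpace ℝ (Fin m) → ℝ)
    (θ θ' : EuclideanSpace ℝ (Fin m)) : ℝ :=
  Real.exp (-L θ' - γ / 2 * ‖θ - θ'‖ ^ 2) / entropyZ m γ L θ

/-- The mean `μ(θ) = ∫ θ' p_θ(θ') dθ'` of the density `p_θ`. -/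
noncomputable def entropyMean (m : ℕ) (γ : ℝ) (L : EuclideanSpace ℝ (Fin m) → ℝ)
    (θ : EuclideanSpace ℝ (Fin m)) : EuclideanSpace ℝ (Fin m) :=
  ∫ θ' : EuclideanSpace ℝ (Fin m), entropyPdf m γ L θ θ' • θ'

/-- The covariance matrix `(Σ_θ)_{ij} = E_{p_θ}[θ'_i θ'_j] − μ_i(θ)μ_j(θ)`. -/
noncomputable def entropyCov (m : ℕ) (γ : ℝ) (L : EuclideanSpace ℝ (Fin m) → ℝ)
    (θ : EuclideanSpace ℝ (Fin m)) : Matrix (Fin m) (Fin m) ℝ :=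
  Matrix.of fun i j =>
    (∫ θ' : EuclideanSpace ℝ (Fin m), θ' i * θ' j * entropyPdf m γ L θ θ') -
      entropyMean m γ L θ i * entropyMean m γ L θ j

/-- The Frobenius norm `‖A‖_F = √(Σ_{ij} A_{ij}²)` of a real matrix. -/
noncomputable def frobeniusNorm' (m : ℕ) (A : Matrix (Fin m) (Fin m) ℝ) : ℝ :=
  Real.sqrt (∑ i, ∑ j, A i j ^ 2)

/-!
If `‖θ‖ ≤ R`, then `‖θ'‖² ≤ 2R² + 2‖θ - θ'‖²` and `L ≥ 0` give
`exp (-L θ' - γ/2 ‖θ - θ'‖²) ≤ exp (γR²/2) exp (-(γ/4) ‖θ'‖²)`, so `∫ (1 + ‖θ'‖²) exp (…)`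
is bounded uniformly in `θ`. On the unit ball `L` is bounded by continuity, which bounds `Z(θ)`
below by a positive constant. Hence `E_{p_θ}[1 + ‖θ'‖²]` is uniformly bounded, and it controls
every first and second moment of `p_θ`, so every entry of `Σ_θ`.
-/

open Metric Real

theorem integrable_exp_neg_mul_sq_norm {V : Type*} [NormedAddCommGroup V] [InnerProductSpace ℝ V]
    [FiniteDimensional ℝ V] [MeasurableSpace V] [BorelSpace V] {b : ℝ} (hb : 0 < b) :
    Integrable fun v : V ↦ rexp (-b * ‖v‖ ^ 2) :=
  Integrable.of_integral_ne_zero <| by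
    rw [GaussianFourier.integral_rexp_neg_mul_sq_norm hb]; positivity

theorem one_add_sq_le_mul_exp {c : ℝ} (hc : 0 < c) (t : ℝ) :
    1 + t ^ 2 ≤ (1 + c⁻¹) * rexp (c * t ^ 2) := by
  have h1 : 1 ≤ rexp (c * t ^ 2) := one_le_exp (by positivity)
  have h2 : t ^ 2 ≤ c⁻¹ * rexp (c * t ^ 2) := by
    rw [inv_mul_eq_div, le_div_iff₀ hc]
    linarith [add_one_le_exp (c * t ^ 2)]
  linarith

section Moments

variable {ι : Type*} [Fintype ι] {p : EuclideanSpace ℝ ι → ℝ} {K : ℝ}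

theorem abs_integral_mul_mul_le (hp : ∀ x, 0 ≤ p x)
    (hint : Integrable fun x ↦ (1 + ‖x‖ ^ 2) * p x) (hK : ∫ x, (1 + ‖x‖ ^ 2) * p x ≤ K)
    (i j : ι) : |∫ x, x i * x j * p x| ≤ K := by
  refine le_trans ?_ hK
  rw [← Real.norm_eq_abs]
  refine norm_integral_le_of_norm_le hint (ae_of_all _ fun x ↦ ?_)
  have hi : |x i| ≤ ‖x‖ := PiLp.norm_apply_le x i
  have hj : |x j| ≤ ‖x‖ := PiLp.norm_apply_le x j
  have hij : |x i| * |x j| ≤ 1 + ‖x‖ ^ 2 := by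
    nlinarith [mul_le_mul hi hj (abs_nonneg _) (norm_nonneg x)]
  rw [Real.norm_eq_abs, abs_mul, abs_mul, abs_of_nonneg (hp x)]
  exact mul_le_mul_of_nonneg_right hij (hp x)

theorem abs_integral_smul_apply_le (hp : ∀ x, 0 ≤ p x)
    (hint : Integrable fun x ↦ (1 + ‖x‖ ^ 2) * p x) (hK : ∫ x, (1 + ‖x‖ ^ 2) * p x ≤ K)
    (i : ι) : |(∫ x, p x • x) i| ≤ K := by
  refine (PiLp.norm_apply_le (∫ x, p x • x) i).trans <|
    (norm_integral_le_of_norm_le hint (ae_of_all _ fun x ↦ ?_)).trans hK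
  rw [norm_smul, Real.norm_eq_abs, abs_of_nonneg (hp x), mul_comm]
  exact mul_le_mul_of_nonneg_right (by nlinarith [sq_nonneg (‖x‖ - 1)]) (hp x)

theorem abs_covariance_le (hp : ∀ x, 0 ≤ p x)
    (hint : Integrable fun x ↦ (1 + ‖x‖ ^ 2) * p x) (hK : ∫ x, (1 + ‖x‖ ^ 2) * p x ≤ K)
    (i j : ι) :
    |(∫ x, x i * x j * p x) - (∫ x, p x • x) i * (∫ x, p x • x) j| ≤ K + K ^ 2 := by
  have hi := abs_integral_smul_apply_le hp hint hK i
  have hj := abs_integral_smul_apply_le hp hint hK j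
  have hmean : |(∫ x, p x • x) i * (∫ x, p x • x) j| ≤ K ^ 2 := by
    rw [abs_mul, sq]
    exact mul_le_mul hi hj (abs_nonneg _) ((abs_nonneg _).trans hi)
  exact (abs_sub _ _).trans (add_le_add (abs_integral_mul_mul_le hp hint hK i j) hmean)

end Moments

theorem frobeniusNorm'_le_of_abs_le {m : ℕ} {A : Matrix (Fin m) (Fin m) ℝ} {c : ℝ} (hc : 0 ≤ c)
    (hA : ∀ i j, |A i j| ≤ c) : frobeniusNorm' m A ≤ m * c := by
  rw [frobeniusNorm', sqrt_le_left (by positivity)]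
  calc ∑ i, ∑ j, A i j ^ 2 ≤ ∑ _i : Fin m, ∑ _j : Fin m, c ^ 2 := by
        gcongr ∑ i, ∑ j, ?_ with i _ j _
        exact sq_le_sq' (abs_le.1 (hA i j)).1 (abs_le.1 (hA i j)).2
    _ = (m * c) ^ 2 := by simp; ring

/-- `entropyZ m γ L θ = ∫ x, entropyWeight γ L θ x` and
`entropyPdf m γ L θ = entropyWeight γ L θ / entropyZ m γ L θ` hold by definition. -/
noncomputable def entropyWeight {E : Type*} [SeminormedAddCommGroup E] (γ : ℝ) (L : E → ℝ)
    (θ x : E) : ℝ :=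
  rexp (-L x - γ / 2 * ‖θ - x‖ ^ 2)

theorem entropyWeight_pos {E : Type*} [SeminormedAddCommGroup E] (γ : ℝ) (L : E → ℝ) (θ x : E) :
    0 < entropyWeight γ L θ x :=
  exp_pos _

section Weight

variable {γ R : ℝ}

section Normed

variable {E : Type*} [SeminormedAddCommGroup E] {L : E → ℝ} {θ : E}

theorem entropyWeight_le_exp (hγ : 0 ≤ γ) (hLnn : ∀ x, 0 ≤ L x) (hθ : ‖θ‖ ≤ R) (x : E) :
    entropyWeight γ L θ x ≤ rexp (γ / 2 * R ^ 2) * rexp (-(γ / 4) * ‖x‖ ^ 2) := by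
  have hx : ‖x‖ ≤ R + ‖θ - x‖ := by
    linarith [norm_le_norm_add_norm_sub' x θ, norm_sub_rev x θ]
  have hx2 : ‖x‖ ^ 2 ≤ 2 * R ^ 2 + 2 * ‖θ - x‖ ^ 2 := by
    nlinarith [norm_nonneg x, sq_nonneg (R - ‖θ - x‖)]
  rw [entropyWeight, ← exp_add, exp_le_exp]
  nlinarith [hLnn x, mul_le_mul_of_nonneg_left hx2 hγ]

theorem one_add_sq_norm_mul_entropyWeight_le (hγ : 0 < γ) (hLnn : ∀ x, 0 ≤ L x)
    (hθ : ‖θ‖ ≤ R) (x : E) :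
    (1 + ‖x‖ ^ 2) * entropyWeight γ L θ x ≤
      (1 + (γ / 8)⁻¹) * rexp (γ / 2 * R ^ 2) * rexp (-(γ / 8) * ‖x‖ ^ 2) := by
  have hexp : rexp (γ / 8 * ‖x‖ ^ 2) * rexp (-(γ / 4) * ‖x‖ ^ 2) = rexp (-(γ / 8) * ‖x‖ ^ 2) := by
    rw [← exp_add]; ring_nf
  calc (1 + ‖x‖ ^ 2) * entropyWeight γ L θ x
      ≤ ((1 + (γ / 8)⁻¹) * rexp (γ / 8 * ‖x‖ ^ 2)) *
          (rexp (γ / 2 * R ^ 2) * rexp (-(γ / 4) * ‖x‖ ^ 2)) :=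
        mul_le_mul (one_add_sq_le_mul_exp (by positivity) _)
          (entropyWeight_le_exp hγ.le hLnn hθ x) (exp_pos _).le (by positivity)
    _ = (1 + (γ / 8)⁻¹) * rexp (γ / 2 * R ^ 2) * rexp (-(γ / 8) * ‖x‖ ^ 2) := by
        linear_combination (1 + (γ / 8)⁻¹) * rexp (γ / 2 * R ^ 2) * hexp

end Normed

variable {V : Type*} [NormedAddCommGroup V] [InnerProductSpace ℝ V] [FiniteDimensional ℝ V]
  [MeasurableSpace V] [BorelSpace V] {L : V → ℝ} {θ : V}

theorem integrable_one_add_sq_norm_mul_entropyWeight (hγ : 0 < γ) (hL : Measurable L)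
    (hLnn : ∀ x, 0 ≤ L x) (θ : V) :
    Integrable fun x ↦ (1 + ‖x‖ ^ 2) * entropyWeight γ L θ x := by
  refine ((integrable_exp_neg_mul_sq_norm (by positivity : 0 < γ / 8)).const_mul
    ((1 + (γ / 8)⁻¹) * rexp (γ / 2 * ‖θ‖ ^ 2))).mono'
    (by unfold entropyWeight; fun_prop) (ae_of_all _ fun x ↦ ?_)
  rw [Real.norm_eq_abs, abs_of_nonneg (by have := entropyWeight_pos γ L θ x; positivity)]
  exact one_add_sq_norm_mul_entropyWeight_le hγ hLnn le_rfl x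

theorem integrable_entropyWeight (hγ : 0 < γ) (hL : Measurable L) (hLnn : ∀ x, 0 ≤ L x)
    (θ : V) : Integrable (entropyWeight γ L θ) := by
  refine (integrable_one_add_sq_norm_mul_entropyWeight hγ hL hLnn θ).mono'
    (by unfold entropyWeight; fun_prop) (ae_of_all _ fun x ↦ ?_)
  rw [Real.norm_eq_abs, abs_of_nonneg (entropyWeight_pos γ L θ x).le]
  exact le_mul_of_one_le_left (entropyWeight_pos γ L θ x).le (by nlinarith [sq_nonneg ‖x‖])

theorem le_integral_entropyWeight (hγ : 0 ≤ γ) (hint : Integrable (entropyWeight γ L θ))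
    {M : ℝ} (hM : ∀ x ∈ ball 0 1, L x ≤ M) (hθ : ‖θ‖ ≤ R) :
    rexp (-(M + γ / 2 * (R + 1) ^ 2)) * volume.real (ball (0 : V) 1) ≤
      ∫ x, entropyWeight γ L θ x := by
  calc rexp (-(M + γ / 2 * (R + 1) ^ 2)) * volume.real (ball (0 : V) 1)
      = ∫ _ in ball (0 : V) 1, rexp (-(M + γ / 2 * (R + 1) ^ 2)) := by
        rw [setIntegral_const, smul_eq_mul, mul_comm]
    _ ≤ ∫ x in ball (0 : V) 1, entropyWeight γ L θ x := by
        refine setIntegral_mono_on (integrableOn_const measure_ball_lt_top.ne)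
          hint.integrableOn measurableSet_ball fun x hx ↦ ?_
        have hθx : ‖θ - x‖ ≤ R + 1 := by
          linarith [norm_sub_le θ x, mem_ball_zero_iff.1 hx]
        have hθx2 : ‖θ - x‖ ^ 2 ≤ (R + 1) ^ 2 := pow_le_pow_left₀ (norm_nonneg _) hθx 2
        rw [entropyWeight, exp_le_exp]
        nlinarith [hM x hx, mul_le_mul_of_nonneg_left hθx2 hγ]
    _ ≤ ∫ x, entropyWeight γ L θ x :=
        setIntegral_le_integral hint (ae_of_all _ fun x ↦ (entropyWeight_pos γ L θ x).le)

end Weight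

section Entropy

variable {m : ℕ} {γ : ℝ} {L : EuclideanSpace ℝ (Fin m) → ℝ}

theorem entropyPdf_nonneg (θ x : EuclideanSpace ℝ (Fin m)) : 0 ≤ entropyPdf m γ L θ x :=
  div_nonneg (entropyWeight_pos γ L θ x).le (integral_nonneg fun x ↦ (entropyWeight_pos γ L θ x).le)

theorem exists_integral_one_add_sq_norm_mul_entropyPdf_le (hγ : 0 < γ) (hLc : Continuous L)
    (hLnn : ∀ x, 0 ≤ L x) (R : ℝ) :
    ∃ K, 0 ≤ K ∧ ∀ θ : EuclideanSpace ℝ (Fin m), ‖θ‖ ≤ R →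
      (Integrable fun x ↦ (1 + ‖x‖ ^ 2) * entropyPdf m γ L θ x) ∧
        ∫ x, (1 + ‖x‖ ^ 2) * entropyPdf m γ L θ x ≤ K := by
  obtain ⟨M, hM⟩ := (isCompact_closedBall (0 : EuclideanSpace ℝ (Fin m)) 1).bddAbove_image
    hLc.continuousOn
  set A := (1 + (γ / 8)⁻¹) * rexp (γ / 2 * R ^ 2) *
    ∫ x : EuclideanSpace ℝ (Fin m), rexp (-(γ / 8) * ‖x‖ ^ 2)
  set B := rexp (-(M + γ / 2 * (R + 1) ^ 2)) * volume.real (ball (0 : EuclideanSpace ℝ (Fin m)) 1)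
  have hA : 0 ≤ A := by positivity
  have hB : 0 < B := mul_pos (exp_pos _) <|
    ENNReal.toReal_pos (measure_ball_pos volume 0 one_pos).ne' measure_ball_lt_top.ne
  refine ⟨A / B, div_nonneg hA hB.le, fun θ hθ ↦ ?_⟩
  have hint := integrable_one_add_sq_norm_mul_entropyWeight hγ hLc.measurable hLnn θ
  have hZ : B ≤ entropyZ m γ L θ :=
    le_integral_entropyWeight hγ.le (integrable_entropyWeight hγ hLc.measurable hLnn θ)
      (fun x hx ↦ hM ⟨x, ball_subset_closedBall hx, rfl⟩) hθ
  have hmoment : ∫ x, (1 + ‖x‖ ^ 2) * entropyWeight γ L θ x ≤ A :=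
    (integral_mono hint ((integrable_exp_neg_mul_sq_norm (by positivity)).const_mul _)
      (one_add_sq_norm_mul_entropyWeight_le hγ hLnn hθ)).trans_eq (integral_const_mul _ _)
  have hpdf : (fun x ↦ (1 + ‖x‖ ^ 2) * entropyPdf m γ L θ x) =
      fun x ↦ (1 + ‖x‖ ^ 2) * entropyWeight γ L θ x / entropyZ m γ L θ :=
    funext fun x ↦ (mul_div_assoc _ _ _).symm
  rw [hpdf, integral_div]
  exact ⟨hint.div_const _, div_le_div₀ hA hmoment hB hZ⟩

end Entropy

/-- For `γ > 0` and `L` continuous and nonnegative, the Frobenius norm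
of the covariance `Σ_θ` of the EntropySGD local measure `p_θ` is uniformly bounded
on every bounded set of parameters: for every `R > 0` the supremum of
`‖Σ_θ‖_F` over `‖θ‖ ≤ R` is finite. -/
theorem entropySGD_cov_bounded (m : ℕ) (γ : ℝ) (hγ : 0 < γ)
    (L : EuclideanSpace ℝ (Fin m) → ℝ) (hLc : Continuous L) (hLnn : ∀ θ', 0 ≤ L θ') :
    ∀ R : ℝ, 0 < R → ∃ s : ℝ, ∀ θ : EuclideanSpace ℝ (Fin m), ‖θ‖ ≤ R →
      frobeniusNorm' m (entropyCov m γ L θ) ≤ s := by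
  intro R _
  obtain ⟨K, hK0, hK⟩ := exists_integral_one_add_sq_norm_mul_entropyPdf_le hγ hLc hLnn R
  refine ⟨m * (K + K ^ 2), fun θ hθ ↦ frobeniusNorm'_le_of_abs_le (by positivity) fun i j ↦ ?_⟩
  obtain ⟨hint, hmoment⟩ := hK θ hθ
  exact abs_covariance_le (entropyPdf_nonneg θ) hint hmoment i j
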